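/- Let s_n denote the number of independent dominating sets of the ortho-chain square cactus S_n for n ≥ 1, and set s_0 = 1 (the one-vertex graph S_0 has exactly one maximal independent set). Then, in the ring of formal power series over ℚ, (1 - 2X) · (∑_{n≥0} s_n Xⁿ) = 1. -/

import Mathlib

/-- `S` is an independent dominating set of `G`: pairwise non-adjacent, and every
vertex outside `S` has a neighbour in `S`. -/
def IsIndepDomSet {V : Type*} (G : SimpleGraph V) (S : Finset V) : Prop :=
  (∀ v ∈ S, ∀ w ∈ S, ¬ G.Adj v w) ∧ ∀ v, v ∉ S → ∃ w ∈ S, G.Adj v w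

/-- The ortho-chain square cactus `S n`: `Sum.inl i` is the cut vertex `x i`
(`0 ≤ i ≤ n`), `Sum.inr (Sum.inl k)` is `y (k+1)` and `Sum.inr (Sum.inr k)` is
`z (k+1)` (`0 ≤ k ≤ n-1`); the `i`-th square (`1 ≤ i ≤ n`) is the four-cycle
`x (i-1) – x i – y i – z i – x (i-1)`. -/
def orthoSq (n : ℕ) : SimpleGraph (Fin (n + 1) ⊕ (Fin n ⊕ Fin n)) :=
  SimpleGraph.fromRel fun p q =>
    match p, q with
    | Sum.inl i, Sum.inl j => (i : ℕ) + 1 = (j : ℕ)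
    | Sum.inl i, Sum.inr (Sum.inl k) => (i : ℕ) = (k : ℕ) + 1
    | Sum.inl i, Sum.inr (Sum.inr k) => (i : ℕ) = (k : ℕ)
    | Sum.inr (Sum.inl k), Sum.inr (Sum.inr k') => k = k'
    | _, _ => False

/-- The number of independent dominating sets of the ortho-chain square cactus `S n`. -/
noncomputable def numIDSOrthoSq (n : ℕ) : ℕ :=
  Nat.card {S : Finset (Fin (n + 1) ⊕ (Fin n ⊕ Fin n)) // IsIndepDomSet (orthoSq n) S}

/-! In an independent dominating set of `S_n` each square contributes exactly one of `y_i`, `z_i`: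
not both, as they are adjacent, and not neither, since then `y_i` and `z_i` would be dominated by
the adjacent cut vertices `x_i` and `x_{i-1}`. A cut vertex then belongs to the set exactly when
none of its neighbours `y_i`, `z_{i+1}` does, and conversely every choice of one vertex per square
extends in this way to an independent dominating set. Hence `s_n = 2ⁿ`, whose generating function
is `1 / (1 - 2X)`. -/

open Sum PowerSeries

theorem PowerSeries.one_sub_C_mul_X_mul_mk_pow {R : Type*} [CommRing R] (a : R) :
    (1 - C a * X) * mk (fun n => a ^ n) = 1 := by
  simpa [rescale_mk, rescale_X, mul_comm] using
    congrArg (rescale a) (mk_one_mul_one_sub_eq_one R)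

theorem IsIndepDomSet.mem_iff_forall_not_adj {V : Type*} {G : SimpleGraph V} {S : Finset V}
    (hS : IsIndepDomSet G S) (v : V) : v ∈ S ↔ ∀ w ∈ S, ¬ G.Adj v w :=
  ⟨hS.1 v, fun h => by_contra fun hv => (hS.2 v hv).elim fun w ⟨hw, hvw⟩ => h w hw hvw⟩

namespace orthoSq

variable {n : ℕ}

/-- `x i` is joined to `z (i+1)` and `x (i+1)` to `y (i+1)`, so any choice from that square is
adjacent to one of the two cut vertices. -/
theorem exists_adj_inr_of_adj_inl {P : Fin n ⊕ Fin n → Prop}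
    (hP : ∀ k, P (inl k) ∨ P (inr k)) {i j : Fin (n + 1)}
    (hij : (orthoSq n).Adj (inl i) (inl j)) :
    ∃ u, P u ∧ ((orthoSq n).Adj (inl i) (inr u) ∨ (orthoSq n).Adj (inl j) (inr u)) := by
  wlog hj : (j : ℕ) = i + 1 generalizing i j
  · obtain ⟨u, hu, h⟩ := this hij.symm (by simp [orthoSq] at hij; omega)
    exact ⟨u, hu, h.symm⟩
  rcases hP ⟨i, by omega⟩ with h | h
  · exact ⟨_, h, Or.inr (by simp [orthoSq, hj])⟩
  · exact ⟨_, h, Or.inl (by simp [orthoSq])⟩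

variable {S : Finset (Fin (n + 1) ⊕ (Fin n ⊕ Fin n))}

theorem inr_inl_mem_or_inr_inr_mem (hS : IsIndepDomSet (orthoSq n) S) (k : Fin n) :
    inr (inl k) ∈ S ∨ inr (inr k) ∈ S := by
  by_contra! ⟨hy, hz⟩
  obtain ⟨_ | _ | _, hw, hyw⟩ := hS.2 _ hy <;> simp [orthoSq] at hyw
  · obtain ⟨_ | _ | _, hw', hzw'⟩ := hS.2 _ hz <;> simp [orthoSq] at hzw'
    · exact hS.1 _ hw' _ hw (by simp [orthoSq]; omega)
    · exact hy (hzw' ▸ hw')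
  · exact hz (hyw ▸ hw)

theorem inr_inr_mem_iff (hS : IsIndepDomSet (orthoSq n) S) (k : Fin n) :
    inr (inr k) ∈ S ↔ inr (inl k) ∉ S :=
  ⟨fun hz hy => hS.1 _ hy _ hz (by simp [orthoSq]),
    (inr_inl_mem_or_inr_inr_mem hS k).resolve_left⟩

theorem inl_mem_iff (hS : IsIndepDomSet (orthoSq n) S) (i : Fin (n + 1)) :
    inl i ∈ S ↔ ∀ u, inr u ∈ S → ¬ (orthoSq n).Adj (inl i) (inr u) := by
  rw [hS.mem_iff_forall_not_adj]
  refine ⟨fun h u hu => h _ hu, fun h w hw hiw => ?_⟩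
  rcases w with j | u
  · obtain ⟨u, hu, hiu | hju⟩ :=
      exists_adj_inr_of_adj_inl (P := fun u => inr u ∈ S) (inr_inl_mem_or_inr_inr_mem hS) hiw
    · exact h u hu hiu
    · exact hS.1 _ hw _ hu hju
  · exact h u hw hiw

def squareChoice (Y : Finset (Fin n)) : Fin n ⊕ Fin n → Prop
  | inl k => k ∈ Y
  | inr k => k ∉ Y

open Classical in
noncomputable def indepDomSetOf (Y : Finset (Fin n)) : Finset (Fin (n + 1) ⊕ (Fin n ⊕ Fin n)) :=
  {v | v.elim (fun i => ∀ u, squareChoice Y u → ¬ (orthoSq n).Adj (inl i) (inr u))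
    (squareChoice Y)}

@[simp]
theorem inl_mem_indepDomSetOf (Y : Finset (Fin n)) (i : Fin (n + 1)) :
    inl i ∈ indepDomSetOf Y ↔
      ∀ u, squareChoice Y u → ¬ (orthoSq n).Adj (inl i) (inr u) := by
  simp [indepDomSetOf]

@[simp]
theorem inr_mem_indepDomSetOf (Y : Finset (Fin n)) (u : Fin n ⊕ Fin n) :
    inr u ∈ indepDomSetOf Y ↔ squareChoice Y u := by
  simp [indepDomSetOf]

theorem isIndepDomSet_indepDomSetOf (Y : Finset (Fin n)) :
    IsIndepDomSet (orthoSq n) (indepDomSetOf Y) := by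
  constructor
  · rintro (i | u) hv (j | u') hw hvw
    · obtain ⟨u, hu, hiu | hju⟩ :=
        exists_adj_inr_of_adj_inl (P := squareChoice Y) (fun k => em (k ∈ Y)) hvw
      · exact (inl_mem_indepDomSetOf Y i).1 hv u hu hiu
      · exact (inl_mem_indepDomSetOf Y j).1 hw u hu hju
    · exact (inl_mem_indepDomSetOf Y i).1 hv u' ((inr_mem_indepDomSetOf Y u').1 hw) hvw
    · exact (inl_mem_indepDomSetOf Y j).1 hw u ((inr_mem_indepDomSetOf Y u).1 hv) hvw.symm
    · rcases u with k | k <;> rcases u' with k' | k' <;> simp [orthoSq] at hvw <;> subst hvw <;>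
        simp_all [squareChoice]
  · rintro (i | k | k) hv
    · simp only [inl_mem_indepDomSetOf, not_forall, not_not] at hv
      obtain ⟨u, hu, hiu⟩ := hv
      exact ⟨inr u, (inr_mem_indepDomSetOf Y u).2 hu, hiu⟩
    · exact ⟨inr (inr k), by simpa [squareChoice] using hv, by simp [orthoSq]⟩
    · exact ⟨inr (inl k), by simpa [squareChoice] using hv, by simp [orthoSq]⟩

theorem inr_mem_iff_squareChoice (hS : IsIndepDomSet (orthoSq n) S) (u : Fin n ⊕ Fin n) :
    inr u ∈ S ↔ squareChoice {k | inr (inl k) ∈ S} u := by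
  rcases u with k | k
  · simp [squareChoice]
  · simp [squareChoice, inr_inr_mem_iff hS]

theorem eq_indepDomSetOf (hS : IsIndepDomSet (orthoSq n) S) :
    S = indepDomSetOf {k | inr (inl k) ∈ S} := by
  ext (i | u)
  · rw [inl_mem_iff hS, inl_mem_indepDomSetOf]
    exact forall_congr' fun u => imp_congr_left (inr_mem_iff_squareChoice hS u)
  · exact (inr_mem_iff_squareChoice hS u).trans (inr_mem_indepDomSetOf _ u).symm

noncomputable def indepDomSetEquivFinset :
    {S : Finset (Fin (n + 1) ⊕ (Fin n ⊕ Fin n)) // IsIndepDomSet (orthoSq n) S} ≃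
      Finset (Fin n) where
  toFun S := {k | inr (inl k) ∈ S.1}
  invFun Y := ⟨indepDomSetOf Y, isIndepDomSet_indepDomSetOf Y⟩
  left_inv S := Subtype.ext (eq_indepDomSetOf S.2).symm
  right_inv Y := by ext; simp [squareChoice]

end orthoSq

theorem numIDSOrthoSq_eq_two_pow (n : ℕ) : numIDSOrthoSq n = 2 ^ n := by
  rw [numIDSOrthoSq, Nat.card_congr orthoSq.indepDomSetEquivFinset]
  simp

/-- In `ℚ⟦X⟧`, `(1 - 2X) · ∑_{n≥0} s_n Xⁿ = 1`, where `s n` is the number of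
independent dominating sets of the ortho-chain square cactus `S n` (and `s 0 = 1`,
`S 0` being the one-vertex graph). -/
theorem numIDSOrthoSq_generating_function :
    (1 - 2 * PowerSeries.X) *
        PowerSeries.mk (fun n : ℕ => (numIDSOrthoSq n : ℚ)) = 1 := by
  simpa [numIDSOrthoSq_eq_two_pow, map_ofNat] using PowerSeries.one_sub_C_mul_X_mul_mk_pow (2 : ℚ)
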